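/- Fix σ ∈ {+1, −1} and p₀ ∈ U, and set λ₀ = LG^σ(p₀). Then the following three conditions are equivalent: (1) p₀ is a degenerate singular point of the Lorentzian lightcone height function h_{λ₀}, i.e. (∂h_{λ₀}/∂x)(p₀) = (∂h_{λ₀}/∂y)(p₀) = 0 and det 𝓗(h_{λ₀})(p₀) = 0, where 𝓗 is the Hessian matrix in the coordinates (x,y); (2) p₀ is a singular point of the S_t¹×S_s¹-valued lightcone Gauss map LG^σ, i.e. the derivative of LG^σ : U → ℝ⁴ at p₀ has rank at most 1; (3) the lightlike Gauss–Kronecker curvature K_l(1,σ) vanishes at p₀. -/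

import Mathlib

noncomputable section

def pprod (x y : Fin 4 → ℝ) : ℝ :=
  -(x 0 * y 0) - x 1 * y 1 + x 2 * y 2 + x 3 * y 3

def pprodR (y : Fin 4 → ℝ) : (Fin 4 → ℝ) →L[ℝ] ℝ :=
  (-(y 0)) • ContinuousLinearMap.proj 0 + (-(y 1)) • ContinuousLinearMap.proj 1
    + y 2 • ContinuousLinearMap.proj 2 + y 3 • ContinuousLinearMap.proj 3

lemma pprodR_apply (y x : Fin 4 → ℝ) : pprodR y x = pprod x y := by
  simp [pprodR, pprod]; ring

lemma hasFDerivAt_pprod {f g : ℝ × ℝ → Fin 4 → ℝ} {f' g' : (ℝ × ℝ) →L[ℝ] (Fin 4 → ℝ)}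
    {p : ℝ × ℝ} (hf : HasFDerivAt f f' p) (hg : HasFDerivAt g g' p) :
    HasFDerivAt (fun q => pprod (f q) (g q))
      ((pprodR (g p)).comp f' + (pprodR (f p)).comp g') p := by
  have hfi : ∀ i : Fin 4, HasFDerivAt (fun q => f q i)
      ((ContinuousLinearMap.proj i : (Fin 4 → ℝ) →L[ℝ] ℝ).comp f') p := fun i =>
    (ContinuousLinearMap.proj i : (Fin 4 → ℝ) →L[ℝ] ℝ).hasFDerivAt.comp p hf
  have hgi : ∀ i : Fin 4, HasFDerivAt (fun q => g q i)
      ((ContinuousLinearMap.proj i : (Fin 4 → ℝ) →L[ℝ] ℝ).comp g') p := fun i =>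
    (ContinuousLinearMap.proj i : (Fin 4 → ℝ) →L[ℝ] ℝ).hasFDerivAt.comp p hg
  have H := ((((hfi 0).mul (hgi 0)).neg.sub ((hfi 1).mul (hgi 1))).add
      ((hfi 2).mul (hgi 2))).add ((hfi 3).mul (hgi 3))
  have heq : ((pprodR (g p)).comp f' + (pprodR (f p)).comp g') =
      (-(f p 0 • (ContinuousLinearMap.proj 0).comp g' + g p 0 • (ContinuousLinearMap.proj 0).comp f') -
          (f p 1 • (ContinuousLinearMap.proj 1).comp g' + g p 1 • (ContinuousLinearMap.proj 1).comp f') +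
        (f p 2 • (ContinuousLinearMap.proj 2).comp g' + g p 2 • (ContinuousLinearMap.proj 2).comp f') +
      (f p 3 • (ContinuousLinearMap.proj 3).comp g' + g p 3 • (ContinuousLinearMap.proj 3).comp f')) := by
    refine ContinuousLinearMap.ext fun v => ?_
    simp [pprodR]
    ring
  rw [heq]
  exact H

lemma pprod_comm (x y : Fin 4 → ℝ) : pprod x y = pprod y x := by simp [pprod]; ring

lemma span_top (Xx Xy E1 E2 : Fin 4 → ℝ)
    (gdet : pprod Xx Xx * pprod Xy Xy - (pprod Xx Xy) ^ 2 ≠ 0)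
    (h11 : pprod E1 E1 = -1) (h22 : pprod E2 E2 = 1) (h12 : pprod E1 E2 = 0)
    (h1x : pprod E1 Xx = 0) (h1y : pprod E1 Xy = 0)
    (h2x : pprod E2 Xx = 0) (h2y : pprod E2 Xy = 0) :
    Submodule.span ℝ (Set.range ![Xx, Xy, E1, E2]) = ⊤ := by
  have hli : LinearIndependent ℝ ![Xx, Xy, E1, E2] := by
    rw [Fintype.linearIndependent_iff]
    intro g hg
    have hsum : g 0 • Xx + g 1 • Xy + g 2 • E1 + g 3 • E2 = 0 := by
      have := hg
      rwa [Fin.sum_univ_four] at this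
    have key : ∀ z : Fin 4 → ℝ,
        g 0 * pprod Xx z + g 1 * pprod Xy z + g 2 * pprod E1 z + g 3 * pprod E2 z = 0 := by
      intro z
      have := congrArg (fun v => pprod v z) hsum
      simp only [pprod, Pi.add_apply, Pi.smul_apply, Pi.zero_apply, smul_eq_mul] at this ⊢
      linear_combination this
    have k1 := key Xx; have k2 := key Xy; have k3 := key E1; have k4 := key E2
    rw [h1x, h2x, pprod_comm Xy Xx] at k1
    rw [h1y, h2y] at k2
    rw [pprod_comm Xx E1, pprod_comm Xy E1, h1x, h1y, h11, pprod_comm E2 E1, h12] at k3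
    rw [pprod_comm Xx E2, pprod_comm Xy E2, h2x, h2y, h12, h22] at k4
    have hg2 : g 2 = 0 := by linarith [k3]
    have hg3 : g 3 = 0 := by linarith [k4]
    rw [hg2, hg3] at k1 k2
    have hg0 : g 0 = 0 := by
      have : g 0 * (pprod Xx Xx * pprod Xy Xy - (pprod Xx Xy) ^ 2) = 0 := by
        linear_combination pprod Xy Xy * k1 - pprod Xx Xy * k2
      rcases mul_eq_zero.1 this with h | h
      · exact h
      · exact absurd h gdet
    have hg1 : g 1 = 0 := by
      have : g 1 * (pprod Xx Xx * pprod Xy Xy - (pprod Xx Xy) ^ 2) = 0 := by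
        linear_combination pprod Xx Xx * k2 - pprod Xx Xy * k1
      rcases mul_eq_zero.1 this with h | h
      · exact h
      · exact absurd h gdet
    intro i; fin_cases i <;> simp_all
  exact hli.span_eq_top_of_card_eq_finrank (by simp)

lemma core_inj (Xx Xy E1 E2 : Fin 4 → ℝ) (σ ξ : ℝ) (hσ : σ ^ 2 = 1) (hξ : 0 < ξ)
    (gdet : pprod Xx Xx * pprod Xy Xy - (pprod Xx Xy) ^ 2 ≠ 0)
    (h11 : pprod E1 E1 = -1) (h22 : pprod E2 E2 = 1) (h12 : pprod E1 E2 = 0)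
    (h1x : pprod E1 Xx = 0) (h1y : pprod E1 Xy = 0)
    (h2x : pprod E2 Xx = 0) (h2y : pprod E2 Xy = 0)
    (hxi : (E1 0 + σ * E2 0) ^ 2 + (E1 1 + σ * E2 1) ^ 2 = ξ ^ 2)
    (u : Fin 4 → ℝ) (hux : pprod u Xx = 0) (huy : pprod u Xy = 0)
    (hc1 : (E1 0 + σ * E2 0) * u 0 + (E1 1 + σ * E2 1) * u 1 = 0)
    (hc2 : (E1 2 + σ * E2 2) * u 2 + (E1 3 + σ * E2 3) * u 3 = 0) :
    u = 0 := by
  set α := pprod u E1 with hα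
  set β := pprod u E2 with hβ
  set u' := u + α • E1 - β • E2 with hu'
  -- u' is pprod-orthogonal to Xx, Xy, E1, E2
  have hu'x : pprod u' Xx = 0 := by
    simp only [hu', pprod, Pi.add_apply, Pi.sub_apply, Pi.smul_apply, smul_eq_mul]
    simp only [pprod] at hux h1x h2x
    linear_combination hux + α * h1x - β * h2x
  have hu'y : pprod u' Xy = 0 := by
    simp only [hu', pprod, Pi.add_apply, Pi.sub_apply, Pi.smul_apply, smul_eq_mul]
    simp only [pprod] at huy h1y h2y
    linear_combination huy + α * h1y - β * h2y
  have hu'1 : pprod u' E1 = 0 := by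
    simp only [hu', pprod, Pi.add_apply, Pi.sub_apply, Pi.smul_apply, smul_eq_mul]
    simp only [pprod] at hα h11 h12
    linear_combination -hα + α * h11 - β * h12
  have hu'2 : pprod u' E2 = 0 := by
    simp only [hu', pprod, Pi.add_apply, Pi.sub_apply, Pi.smul_apply, smul_eq_mul]
    simp only [pprod] at hβ h22 h12
    linear_combination -hβ + α * h12 - β * h22
  -- hence u' = 0
  have hspan := span_top Xx Xy E1 E2 gdet h11 h22 h12 h1x h1y h2x h2y
  have hz : ∀ v : Fin 4 → ℝ, pprodR u' v = 0 := by
    intro v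
    have hv : v ∈ Submodule.span ℝ (Set.range ![Xx, Xy, E1, E2]) := by
      rw [hspan]; trivial
    induction hv using Submodule.span_induction with
    | mem x hx =>
      obtain ⟨i, rfl⟩ := hx
      fin_cases i <;>
        simp only [Matrix.cons_val_zero, Matrix.cons_val_one, Matrix.head_cons, pprodR_apply,
          Matrix.cons_val_two, Matrix.cons_val_three, Matrix.tail_cons] <;>
        rw [pprod_comm] <;> assumption
    | zero => simp
    | add x y _ _ hx hy => simp [hx, hy]
    | smul c x _ hx => simp [hx]
  have hu'0 : u' = 0 := by
    funext i
    fin_cases i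
    · have := hz (Pi.single 0 1); rw [pprodR_apply] at this
      simpa [pprod, Pi.single_apply] using this
    · have := hz (Pi.single 1 1); rw [pprodR_apply] at this
      simpa [pprod, Pi.single_apply] using this
    · have := hz (Pi.single 2 1); rw [pprodR_apply] at this
      simpa [pprod, Pi.single_apply] using this
    · have := hz (Pi.single 3 1); rw [pprodR_apply] at this
      simpa [pprod, Pi.single_apply] using this
  -- so u = -α • E1 + β • E2
  have hu : ∀ i, u i = -α * E1 i + β * E2 i := by
    intro i
    have := congrFun hu'0 i
    simp only [hu', Pi.add_apply, Pi.sub_apply, Pi.smul_apply, Pi.zero_apply, smul_eq_mul] at this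
    linarith
  -- relation (i): α + σ * β = 0 (from hc1 + hc2 i.e. pprod w u = 0 computations)
  have hi : α + σ * β = 0 := by
    simp only [pprod] at h11 h22 h12
    have e0 := hu 0; have e1 := hu 1; have e2 := hu 2; have e3 := hu 3
    linear_combination hc2 - hc1 + α * h11 + (σ * α - β) * h12 - σ * β * h22 +
      (E1 0 + σ * E2 0) * e0 + (E1 1 + σ * E2 1) * e1 -
      (E1 2 + σ * E2 2) * e2 - (E1 3 + σ * E2 3) * e3
  -- relation (ii) from hc1, then β = 0
  have hβ0 : β = 0 := by
    have e0 := hu 0; have e1 := hu 1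
    have hii : β * ((E1 0 + σ * E2 0) ^ 2 + (E1 1 + σ * E2 1) ^ 2) = 0 := by
      linear_combination σ * hc1 - σ * (E1 0 + σ * E2 0) * e0 - σ * (E1 1 + σ * E2 1) * e1 +
        (σ * (E1 0 ^ 2 + E1 1 ^ 2) + σ ^ 2 * (E1 0 * E2 0 + E1 1 * E2 1)) * hi -
        (β * (E1 0 ^ 2 + E1 1 ^ 2) + σ * β * (E1 0 * E2 0 + E1 1 * E2 1)) * hσ
    rw [hxi] at hii
    have hξ2 : ξ ^ 2 ≠ 0 := pow_ne_zero 2 (ne_of_gt hξ)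
    exact (mul_eq_zero.1 hii).resolve_right hξ2
  have hα0 : α = 0 := by rw [hβ0] at hi; linarith
  funext i
  rw [hu i, hα0, hβ0]; simp

lemma pprod_smul_add (c d : ℝ) (x y z : Fin 4 → ℝ) :
    pprod (c • x + d • y) z = c * pprod x z + d * pprod y z := by
  simp only [pprod, Pi.add_apply, Pi.smul_apply, smul_eq_mul]; ring

lemma core_equiv (Xx Xy E1 E2 B1 B2 : Fin 4 → ℝ) (σ ξ h11 h12 h22 : ℝ)
    (hσ : σ ^ 2 = 1) (hξ : 0 < ξ)
    (gdet : pprod Xx Xx * pprod Xy Xy - (pprod Xx Xy) ^ 2 ≠ 0)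
    (hE11 : pprod E1 E1 = -1) (hE22 : pprod E2 E2 = 1) (hE12 : pprod E1 E2 = 0)
    (h1x : pprod E1 Xx = 0) (h1y : pprod E1 Xy = 0)
    (h2x : pprod E2 Xx = 0) (h2y : pprod E2 Xy = 0)
    (hxi : (E1 0 + σ * E2 0) ^ 2 + (E1 1 + σ * E2 1) ^ 2 = ξ ^ 2)
    (hB1x : pprod B1 Xx = -(ξ⁻¹ * h11)) (hB1y : pprod B1 Xy = -(ξ⁻¹ * h12))
    (hB2x : pprod B2 Xx = -(ξ⁻¹ * h12)) (hB2y : pprod B2 Xy = -(ξ⁻¹ * h22))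
    (hB1c1 : (E1 0 + σ * E2 0) * B1 0 + (E1 1 + σ * E2 1) * B1 1 = 0)
    (hB1c2 : (E1 2 + σ * E2 2) * B1 2 + (E1 3 + σ * E2 3) * B1 3 = 0)
    (hB2c1 : (E1 0 + σ * E2 0) * B2 0 + (E1 1 + σ * E2 1) * B2 1 = 0)
    (hB2c2 : (E1 2 + σ * E2 2) * B2 2 + (E1 3 + σ * E2 3) * B2 3 = 0) :
    (∃ c d : ℝ, ¬(c = 0 ∧ d = 0) ∧ c • B1 + d • B2 = 0) ↔ h11 * h22 - h12 ^ 2 = 0 := by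
  have hξ0 : ξ ≠ 0 := ne_of_gt hξ
  constructor
  · rintro ⟨c, d, hcd, h0⟩
    have ex : c * pprod B1 Xx + d * pprod B2 Xx = 0 := by
      rw [← pprod_smul_add, h0]; simp [pprod]
    have ey : c * pprod B1 Xy + d * pprod B2 Xy = 0 := by
      rw [← pprod_smul_add, h0]; simp [pprod]
    rw [hB1x, hB2x] at ex
    rw [hB1y, hB2y] at ey
    have hinv : (ξ⁻¹ : ℝ) ≠ 0 := inv_ne_zero hξ0
    have k1 : c * h11 + d * h12 = 0 := by
      have h2 : ξ⁻¹ * (c * h11 + d * h12) = 0 := by linear_combination -ex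
      exact (mul_eq_zero.1 h2).resolve_left hinv
    have k2 : c * h12 + d * h22 = 0 := by
      have h2 : ξ⁻¹ * (c * h12 + d * h22) = 0 := by linear_combination -ey
      exact (mul_eq_zero.1 h2).resolve_left hinv
    rcases not_and_or.1 hcd with hc | hd
    · have : c * (h11 * h22 - h12 ^ 2) = 0 := by linear_combination h22 * k1 - h12 * k2
      exact (mul_eq_zero.1 this).resolve_left hc
    · have : d * (h11 * h22 - h12 ^ 2) = 0 := by linear_combination h11 * k2 - h12 * k1
      exact (mul_eq_zero.1 this).resolve_left hd
  · intro hdet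
    by_cases h0 : h11 = 0 ∧ h12 = 0
    · refine ⟨1, 0, by simp, ?_⟩
      have hB1 : B1 = 0 := by
        refine core_inj Xx Xy E1 E2 σ ξ hσ hξ gdet hE11 hE22 hE12 h1x h1y h2x h2y hxi B1
          ?_ ?_ hB1c1 hB1c2
        · rw [hB1x, h0.1]; ring
        · rw [hB1y, h0.2]; ring
      rw [hB1]; simp
    · refine ⟨h12, -h11, ?_, ?_⟩
      · rintro ⟨hc, hd⟩
        exact h0 ⟨by linarith [hd], hc⟩
      · refine core_inj Xx Xy E1 E2 σ ξ hσ hξ gdet hE11 hE22 hE12 h1x h1y h2x h2y hxi _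
          ?_ ?_ ?_ ?_
        · rw [pprod_smul_add, hB1x, hB2x]; ring
        · rw [pprod_smul_add, hB1y, hB2y]
          have h2 : ξ⁻¹ * (h11 * h22 - h12 ^ 2) = 0 := by rw [hdet]; ring
          linear_combination h2
        · simp only [Pi.add_apply, Pi.smul_apply, smul_eq_mul]
          linear_combination h12 * hB1c1 - h11 * hB2c1
        · simp only [Pi.add_apply, Pi.smul_apply, smul_eq_mul]
          linear_combination h12 * hB1c2 - h11 * hB2c2

lemma myrank_le_one_iff (B : (ℝ × ℝ) →L[ℝ] (Fin 4 → ℝ)) :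
    Module.finrank ℝ (LinearMap.range B.toLinearMap) ≤ 1 ↔
      ∃ c d : ℝ, ¬(c = 0 ∧ d = 0) ∧ c • B (1, 0) + d • B (0, 1) = 0 := by
  have hrange : LinearMap.range B.toLinearMap =
      Submodule.span ℝ {B (1, 0), B (0, 1)} := by
    apply le_antisymm
    · rintro x ⟨v, rfl⟩
      have hv : v = v.1 • ((1 : ℝ), (0 : ℝ)) + v.2 • ((0 : ℝ), (1 : ℝ)) := by
        ext <;> simp
      have : B.toLinearMap v = v.1 • B (1, 0) + v.2 • B (0, 1) := by
        calc B.toLinearMap v = B (v.1 • ((1 : ℝ), (0 : ℝ)) + v.2 • ((0 : ℝ), (1 : ℝ))) := by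
              rw [← hv]; rfl
          _ = v.1 • B (1, 0) + v.2 • B (0, 1) := by rw [map_add, map_smul, map_smul]
      rw [this]
      exact Submodule.add_mem _
        (Submodule.smul_mem _ _ (Submodule.subset_span (by simp)))
        (Submodule.smul_mem _ _ (Submodule.subset_span (by simp)))
    · rw [Submodule.span_le]
      rintro x (rfl | rfl)
      · exact ⟨(1, 0), rfl⟩
      · exact ⟨(0, 1), rfl⟩
  rw [hrange]
  constructor
  · intro h
    by_contra hne
    push_neg at hne
    have hli : LinearIndependent ℝ ![B (1, 0), B (0, 1)] := by
      rw [LinearIndependent.pair_iff]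
      intro s t hst
      by_contra hc
      exact hne s t (by tauto) hst
    have h2 := finrank_span_eq_card hli
    have hr : Set.range ![B (1, 0), B (0, 1)] = {B (1, 0), B (0, 1)} := by
      simp [Matrix.range_cons, Matrix.range_empty, Set.pair_comm]
    rw [hr] at h2
    rw [h2] at h
    simp at h
  · rintro ⟨c, d, hcd, h0⟩
    rcases not_and_or.1 hcd with hc | hd
    · have hB1 : B (1, 0) = (-(c⁻¹ * d)) • B (0, 1) := by
        have := congrArg (fun z => c⁻¹ • z) h0
        simp only [smul_add, smul_smul, inv_mul_cancel₀ hc, one_smul, smul_zero] at this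
        have h2 : B (1, 0) + (c⁻¹ * d) • B (0, 1) = 0 := this
        rw [eq_neg_of_add_eq_zero_left h2]; exact (neg_smul _ _).symm
      have hle : Submodule.span ℝ {B (1, 0), B (0, 1)} ≤ Submodule.span ℝ {B (0, 1)} := by
        rw [Submodule.span_le]
        rintro x (rfl | rfl)
        · rw [hB1]
          exact Submodule.smul_mem _ _ (Submodule.subset_span rfl)
        · exact Submodule.subset_span rfl
      refine le_trans (Submodule.finrank_mono hle) ?_
      by_cases hz : B (0, 1) = 0
      · rw [hz, Submodule.span_zero_singleton]
        simp
      · rw [finrank_span_singleton hz]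
    · have hB2 : B (0, 1) = (-(d⁻¹ * c)) • B (1, 0) := by
        have := congrArg (fun z => d⁻¹ • z) h0
        simp only [smul_add, smul_smul, inv_mul_cancel₀ hd, one_smul, smul_zero] at this
        have h2 : (d⁻¹ * c) • B (1, 0) + B (0, 1) = 0 := this
        rw [eq_neg_of_add_eq_zero_right h2]; exact (neg_smul _ _).symm
      have hle : Submodule.span ℝ {B (1, 0), B (0, 1)} ≤ Submodule.span ℝ {B (1, 0)} := by
        rw [Submodule.span_le]
        rintro x (rfl | rfl)
        · exact Submodule.subset_span rfl
        · rw [hB2]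
          exact Submodule.smul_mem _ _ (Submodule.subset_span rfl)
      refine le_trans (Submodule.finrank_mono hle) ?_
      by_cases hz : B (1, 0) = 0
      · rw [hz, Submodule.span_zero_singleton]
        simp
      · rw [finrank_span_singleton hz]

lemma pprod_smul_right (c : ℝ) (x y : Fin 4 → ℝ) : pprod x (c • y) = c * pprod x y := by
  simp only [pprod, Pi.smul_apply, smul_eq_mul]; ring

lemma pprod_add_smul_left (x y z : Fin 4 → ℝ) (σ : ℝ) :
    pprod (x + σ • y) z = pprod x z + σ * pprod y z := by
  simp only [pprod, Pi.add_apply, Pi.smul_apply, smul_eq_mul]; ring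

lemma pprod_w_self (x y : Fin 4 → ℝ) (σ : ℝ) :
    pprod (x + σ • y) (x + σ • y) =
      pprod x x + 2 * σ * pprod x y + σ ^ 2 * pprod y y := by
  simp only [pprod, Pi.add_apply, Pi.smul_apply, smul_eq_mul]; ring

def pdx (f : ℝ × ℝ → ℝ) (p : ℝ × ℝ) : ℝ := fderiv ℝ f p (1, 0)
def pdy (f : ℝ × ℝ → ℝ) (p : ℝ × ℝ) : ℝ := fderiv ℝ f p (0, 1)

def Dx (X : ℝ × ℝ → Fin 4 → ℝ) (p : ℝ × ℝ) : Fin 4 → ℝ := fderiv ℝ X p (1, 0)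
def Dy (X : ℝ × ℝ → Fin 4 → ℝ) (p : ℝ × ℝ) : Fin 4 → ℝ := fderiv ℝ X p (0, 1)
def Dxx (X : ℝ × ℝ → Fin 4 → ℝ) (p : ℝ × ℝ) : Fin 4 → ℝ := Dx (Dx X) p
def Dxy (X : ℝ × ℝ → Fin 4 → ℝ) (p : ℝ × ℝ) : Fin 4 → ℝ := Dy (Dx X) p
def Dyy (X : ℝ × ℝ → Fin 4 → ℝ) (p : ℝ × ℝ) : Fin 4 → ℝ := Dy (Dy X) p

def detHess (f : ℝ × ℝ → ℝ) (p : ℝ × ℝ) : ℝ :=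
  pdx (pdx f) p * pdy (pdy f) p - (pdy (pdx f) p) ^ 2

def IsLorentzSurface (U : Set (ℝ × ℝ)) (X : ℝ × ℝ → Fin 4 → ℝ) : Prop :=
  IsOpen U ∧ ContDiffOn ℝ (⊤ : ℕ∞) X U ∧
    ∀ p ∈ U,
      pprod (Dx X p) (Dx X p) * pprod (Dy X p) (Dy X p) - (pprod (Dx X p) (Dy X p)) ^ 2 < 0

def IsNormalFrame (U : Set (ℝ × ℝ)) (X e1 e2 : ℝ × ℝ → Fin 4 → ℝ) : Prop :=
  ContDiffOn ℝ (⊤ : ℕ∞) e1 U ∧ ContDiffOn ℝ (⊤ : ℕ∞) e2 U ∧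
    ∀ p ∈ U,
      pprod (e1 p) (e1 p) = -1 ∧ pprod (e2 p) (e2 p) = 1 ∧ pprod (e1 p) (e2 p) = 0 ∧
      pprod (e1 p) (Dx X p) = 0 ∧ pprod (e1 p) (Dy X p) = 0 ∧
      pprod (e2 p) (Dx X p) = 0 ∧ pprod (e2 p) (Dy X p) = 0

def xi (e1 e2 : ℝ × ℝ → Fin 4 → ℝ) (σ : ℝ) (p : ℝ × ℝ) : ℝ :=
  Real.sqrt ((e1 p 0 + σ * e2 p 0) ^ 2 + (e1 p 1 + σ * e2 p 1) ^ 2)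

def LG (e1 e2 : ℝ × ℝ → Fin 4 → ℝ) (σ : ℝ) (p : ℝ × ℝ) : Fin 4 → ℝ :=
  (xi e1 e2 σ p)⁻¹ • (e1 p + σ • e2 p)

def KlVanish (X e1 e2 : ℝ × ℝ → Fin 4 → ℝ) (σ : ℝ) (p : ℝ × ℝ) : Prop :=
  pprod (Dxx X p) (e1 p + σ • e2 p) * pprod (Dyy X p) (e1 p + σ • e2 p)
    - (pprod (Dxy X p) (e1 p + σ • e2 p)) ^ 2 = 0

set_option maxHeartbeats 1000000 in
theorem stmt2 (U : Set (ℝ × ℝ)) (X e1 e2 : ℝ × ℝ → Fin 4 → ℝ)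
    (hsurf : IsLorentzSurface U X) (hframe : IsNormalFrame U X e1 e2)
    (σ : ℝ) (hσ : σ = 1 ∨ σ = -1)
    (p₀ : ℝ × ℝ) (hp₀ : p₀ ∈ U) :
    ((pdx (fun p => pprod (X p) (LG e1 e2 σ p₀)) p₀ = 0 ∧
        pdy (fun p => pprod (X p) (LG e1 e2 σ p₀)) p₀ = 0 ∧
        detHess (fun p => pprod (X p) (LG e1 e2 σ p₀)) p₀ = 0) ↔
      Module.finrank ℝ
        (LinearMap.range (fderiv ℝ (LG e1 e2 σ) p₀).toLinearMap) ≤ 1) ∧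
    ((Module.finrank ℝ
        (LinearMap.range (fderiv ℝ (LG e1 e2 σ) p₀).toLinearMap) ≤ 1) ↔
      KlVanish X e1 e2 σ p₀) := by
  obtain ⟨hU, hXc, hgdet⟩ := hsurf
  obtain ⟨he1c, he2c, hfr⟩ := hframe
  have hσ2 : σ ^ 2 = 1 := by rcases hσ with rfl | rfl <;> norm_num
  set w : ℝ × ℝ → Fin 4 → ℝ := fun p => e1 p + σ • e2 p with hwdef
  have hXa : ∀ p ∈ U, ContDiffAt ℝ (⊤ : ℕ∞) X p := fun p hp => hXc.contDiffAt (hU.mem_nhds hp)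
  have he1a : ∀ p ∈ U, ContDiffAt ℝ (⊤ : ℕ∞) e1 p := fun p hp => he1c.contDiffAt (hU.mem_nhds hp)
  have he2a : ∀ p ∈ U, ContDiffAt ℝ (⊤ : ℕ∞) e2 p := fun p hp => he2c.contDiffAt (hU.mem_nhds hp)
  -- lightlikeness of w on U
  have hww : ∀ p ∈ U, pprod (w p) (w p) = 0 := by
    intro p hp
    obtain ⟨f1, f2, f3, f4, f5, f6, f7⟩ := hfr p hp
    rw [hwdef]
    rw [pprod_w_self, f1, f2, f3, hσ2]; ring
  have hwe1 : ∀ p ∈ U, pprod (w p) (e1 p) = -1 := by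
    intro p hp
    obtain ⟨f1, f2, f3, f4, f5, f6, f7⟩ := hfr p hp
    rw [hwdef, pprod_add_smul_left, f1, pprod_comm, f3]; ring
  -- positivity of the argument of the square root
  have harg : ∀ p ∈ U, 0 < (e1 p 0 + σ * e2 p 0) ^ 2 + (e1 p 1 + σ * e2 p 1) ^ 2 := by
    intro p hp
    by_contra hle
    push_neg at hle
    have h0 : e1 p 0 + σ * e2 p 0 = 0 := by
      have : (e1 p 0 + σ * e2 p 0) ^ 2 = 0 :=
        le_antisymm (by nlinarith [sq_nonneg (e1 p 1 + σ * e2 p 1)]) (sq_nonneg _)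
      exact pow_eq_zero_iff two_ne_zero |>.1 this
    have h1 : e1 p 1 + σ * e2 p 1 = 0 := by
      have : (e1 p 1 + σ * e2 p 1) ^ 2 = 0 :=
        le_antisymm (by nlinarith [sq_nonneg (e1 p 0 + σ * e2 p 0)]) (sq_nonneg _)
      exact pow_eq_zero_iff two_ne_zero |>.1 this
    have hww' := hww p hp
    simp only [hwdef, pprod, Pi.add_apply, Pi.smul_apply, smul_eq_mul] at hww'
    rw [h0, h1] at hww'
    have h2 : e1 p 2 + σ * e2 p 2 = 0 := by
      have : (e1 p 2 + σ * e2 p 2) ^ 2 = 0 :=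
        le_antisymm (by nlinarith [sq_nonneg (e1 p 3 + σ * e2 p 3)]) (sq_nonneg _)
      exact pow_eq_zero_iff two_ne_zero |>.1 this
    have h3 : e1 p 3 + σ * e2 p 3 = 0 := by
      have : (e1 p 3 + σ * e2 p 3) ^ 2 = 0 :=
        le_antisymm (by nlinarith [sq_nonneg (e1 p 2 + σ * e2 p 2)]) (sq_nonneg _)
      exact pow_eq_zero_iff two_ne_zero |>.1 this
    have hne := hwe1 p hp
    simp only [hwdef, pprod, Pi.add_apply, Pi.smul_apply, smul_eq_mul] at hne
    rw [h0, h1, h2, h3] at hne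
    norm_num at hne
  have hxipos : ∀ p ∈ U, 0 < xi e1 e2 σ p := fun p hp => Real.sqrt_pos.2 (harg p hp)
  have hxisq : ∀ p ∈ U,
      (xi e1 e2 σ p) ^ 2 = (e1 p 0 + σ * e2 p 0) ^ 2 + (e1 p 1 + σ * e2 p 1) ^ 2 :=
    fun p hp => Real.sq_sqrt (le_of_lt (harg p hp))
  have hp₀n : U ∈ nhds p₀ := hU.mem_nhds hp₀
  have hXd : DifferentiableAt ℝ X p₀ := (hXa p₀ hp₀).differentiableAt (by simp)
  have he1d : DifferentiableAt ℝ e1 p₀ := (he1a p₀ hp₀).differentiableAt (by simp)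
  have he2d : DifferentiableAt ℝ e2 p₀ := (he2a p₀ hp₀).differentiableAt (by simp)
  have hwd : DifferentiableAt ℝ w p₀ := he1d.add (he2d.const_smul σ)
  set W' := fderiv ℝ w p₀ with hW'def
  have hw' : HasFDerivAt w W' p₀ := hwd.hasFDerivAt
  -- second derivative of X
  have hX1 : ContDiffAt ℝ 1 (fderiv ℝ X) p₀ := (hXa p₀ hp₀).fderiv_right (WithTop.coe_le_coe.2 le_top)
  have hXdd : DifferentiableAt ℝ (fderiv ℝ X) p₀ := hX1.differentiableAt one_ne_zero
  set F'' := fderiv ℝ (fderiv ℝ X) p₀ with hF''def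
  have hF'' : HasFDerivAt (fderiv ℝ X) F'' p₀ := hXdd.hasFDerivAt
  have hsym : ∀ v u : ℝ × ℝ, F'' v u = F'' u v := by
    refine second_derivative_symmetric_of_eventually (f := X) ?_ hF''
    filter_upwards [hp₀n] with q hq
    exact ((hXa q hq).differentiableAt (by simp)).hasFDerivAt
  have hap : ∀ v : ℝ × ℝ, ∀ L : (ℝ × ℝ) →L[ℝ] (Fin 4 → ℝ),
      (ContinuousLinearMap.apply ℝ (Fin 4 → ℝ) v) L = L v := fun _ _ => rfl
  have hDx' : HasFDerivAt (Dx X)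
      ((ContinuousLinearMap.apply ℝ (Fin 4 → ℝ) ((1 : ℝ), (0 : ℝ))).comp F'') p₀ :=
    (ContinuousLinearMap.apply ℝ (Fin 4 → ℝ) ((1 : ℝ), (0 : ℝ))).hasFDerivAt.comp p₀ hF''
  have hDy' : HasFDerivAt (Dy X)
      ((ContinuousLinearMap.apply ℝ (Fin 4 → ℝ) ((0 : ℝ), (1 : ℝ))).comp F'') p₀ :=
    (ContinuousLinearMap.apply ℝ (Fin 4 → ℝ) ((0 : ℝ), (1 : ℝ))).hasFDerivAt.comp p₀ hF''
  have hDx10 : ((ContinuousLinearMap.apply ℝ (Fin 4 → ℝ) ((1 : ℝ), (0 : ℝ))).comp F'') (1, 0)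
      = Dxx X p₀ := by
    have h := hDx'.fderiv
    rw [← h]; rfl
  have hDx01 : ((ContinuousLinearMap.apply ℝ (Fin 4 → ℝ) ((1 : ℝ), (0 : ℝ))).comp F'') (0, 1)
      = Dxy X p₀ := by
    have h := hDx'.fderiv
    rw [← h]; rfl
  have hDy10 : ((ContinuousLinearMap.apply ℝ (Fin 4 → ℝ) ((0 : ℝ), (1 : ℝ))).comp F'') (1, 0)
      = Dxy X p₀ := by
    have e : ((ContinuousLinearMap.apply ℝ (Fin 4 → ℝ) ((0 : ℝ), (1 : ℝ))).comp F'') (1, 0)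
        = F'' (1, 0) (0, 1) := rfl
    rw [e, hsym (1, 0) (0, 1)]
    exact hDx01
  have hDy01 : ((ContinuousLinearMap.apply ℝ (Fin 4 → ℝ) ((0 : ℝ), (1 : ℝ))).comp F'') (0, 1)
      = Dyy X p₀ := by
    have h := hDy'.fderiv
    rw [← h]; rfl
  -- orthogonality identities on U
  have hwx : ∀ q ∈ U, pprod (w q) (Dx X q) = 0 := by
    intro q hq
    obtain ⟨f1, f2, f3, f4, f5, f6, f7⟩ := hfr q hq
    rw [hwdef, pprod_add_smul_left, f4, f6]; ring
  have hwy : ∀ q ∈ U, pprod (w q) (Dy X q) = 0 := by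
    intro q hq
    obtain ⟨f1, f2, f3, f4, f5, f6, f7⟩ := hfr q hq
    rw [hwdef, pprod_add_smul_left, f5, f7]; ring
  -- differentiating the orthogonality identities
  have hkeyx : ∀ v : ℝ × ℝ, pprod (W' v) (Dx X p₀) +
      pprod (((ContinuousLinearMap.apply ℝ (Fin 4 → ℝ) ((1 : ℝ), (0 : ℝ))).comp F'') v) (w p₀)
        = 0 := by
    have hFd := hasFDerivAt_pprod hw' hDx'
    have h0 : HasFDerivAt (fun q => pprod (w q) (Dx X q)) (0 : (ℝ × ℝ) →L[ℝ] ℝ) p₀ := by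
      refine (hasFDerivAt_const (𝕜 := ℝ) (0 : ℝ) p₀).congr_of_eventuallyEq ?_
      filter_upwards [hp₀n] with q hq
      exact hwx q hq
    have hu := hFd.unique h0
    intro v
    have hv := ContinuousLinearMap.ext_iff.1 hu v
    simp only [ContinuousLinearMap.add_apply, ContinuousLinearMap.comp_apply,
      ContinuousLinearMap.zero_apply] at hv
    rw [pprodR_apply, pprodR_apply] at hv
    exact hv
  have hkeyy : ∀ v : ℝ × ℝ, pprod (W' v) (Dy X p₀) +
      pprod (((ContinuousLinearMap.apply ℝ (Fin 4 → ℝ) ((0 : ℝ), (1 : ℝ))).comp F'') v) (w p₀)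
        = 0 := by
    have hFd := hasFDerivAt_pprod hw' hDy'
    have h0 : HasFDerivAt (fun q => pprod (w q) (Dy X q)) (0 : (ℝ × ℝ) →L[ℝ] ℝ) p₀ := by
      refine (hasFDerivAt_const (𝕜 := ℝ) (0 : ℝ) p₀).congr_of_eventuallyEq ?_
      filter_upwards [hp₀n] with q hq
      exact hwy q hq
    have hu := hFd.unique h0
    intro v
    have hv := ContinuousLinearMap.ext_iff.1 hu v
    simp only [ContinuousLinearMap.add_apply, ContinuousLinearMap.comp_apply,
      ContinuousLinearMap.zero_apply] at hv
    rw [pprodR_apply, pprodR_apply] at hv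
    exact hv
  -- differentiability of xi and LG
  have he1i : ∀ i : Fin 4, DifferentiableAt ℝ (fun p => e1 p i) p₀ := fun i =>
    ((ContinuousLinearMap.proj i : (Fin 4 → ℝ) →L[ℝ] ℝ).differentiableAt).comp p₀ he1d
  have he2i : ∀ i : Fin 4, DifferentiableAt ℝ (fun p => e2 p i) p₀ := fun i =>
    ((ContinuousLinearMap.proj i : (Fin 4 → ℝ) →L[ℝ] ℝ).differentiableAt).comp p₀ he2d
  have hA_d : DifferentiableAt ℝ
      (fun p => (e1 p 0 + σ * e2 p 0) ^ 2 + (e1 p 1 + σ * e2 p 1) ^ 2) p₀ :=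
    (((he1i 0).add ((he2i 0).const_mul σ)).pow 2).add
      (((he1i 1).add ((he2i 1).const_mul σ)).pow 2)
  have hxid : DifferentiableAt ℝ (xi e1 e2 σ) p₀ := hA_d.sqrt (ne_of_gt (harg p₀ hp₀))
  have hxinvd : DifferentiableAt ℝ (fun p => (xi e1 e2 σ p)⁻¹) p₀ :=
    hxid.inv (ne_of_gt (hxipos p₀ hp₀))
  have hLG' : HasFDerivAt (LG e1 e2 σ)
      ((xi e1 e2 σ p₀)⁻¹ • W' +
        (fderiv ℝ (fun p => (xi e1 e2 σ p)⁻¹) p₀).smulRight (w p₀)) p₀ :=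
    hxinvd.hasFDerivAt.smul hw'
  set B := fderiv ℝ (LG e1 e2 σ) p₀ with hBdef
  have hBeq : B = (xi e1 e2 σ p₀)⁻¹ • W' +
      (fderiv ℝ (fun p => (xi e1 e2 σ p)⁻¹) p₀).smulRight (w p₀) := hLG'.fderiv
  have hBhas : HasFDerivAt (LG e1 e2 σ) B p₀ := by rw [hBeq]; exact hLG'
  have hBv : ∀ v : ℝ × ℝ, B v = (xi e1 e2 σ p₀)⁻¹ • W' v +
      (fderiv ℝ (fun p => (xi e1 e2 σ p)⁻¹) p₀ v) • w p₀ := by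
    intro v
    rw [hBeq]
    simp [ContinuousLinearMap.add_apply, ContinuousLinearMap.smul_apply,
      ContinuousLinearMap.smulRight_apply]
  have hξ0 : (0 : ℝ) < xi e1 e2 σ p₀ := hxipos p₀ hp₀
  have hξne : xi e1 e2 σ p₀ ≠ 0 := ne_of_gt hξ0
  -- the four pairings
  have hB1x : pprod (B (1, 0)) (Dx X p₀) =
      -((xi e1 e2 σ p₀)⁻¹ * pprod (Dxx X p₀) (w p₀)) := by
    rw [hBv, pprod_smul_add, hwx p₀ hp₀]
    have h := hkeyx (1, 0); rw [hDx10] at h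
    linear_combination (xi e1 e2 σ p₀)⁻¹ * h
  have hB1y : pprod (B (1, 0)) (Dy X p₀) =
      -((xi e1 e2 σ p₀)⁻¹ * pprod (Dxy X p₀) (w p₀)) := by
    rw [hBv, pprod_smul_add, hwy p₀ hp₀]
    have h := hkeyy (1, 0); rw [hDy10] at h
    linear_combination (xi e1 e2 σ p₀)⁻¹ * h
  have hB2x : pprod (B (0, 1)) (Dx X p₀) =
      -((xi e1 e2 σ p₀)⁻¹ * pprod (Dxy X p₀) (w p₀)) := by
    rw [hBv, pprod_smul_add, hwx p₀ hp₀]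
    have h := hkeyx (0, 1); rw [hDx01] at h
    linear_combination (xi e1 e2 σ p₀)⁻¹ * h
  have hB2y : pprod (B (0, 1)) (Dy X p₀) =
      -((xi e1 e2 σ p₀)⁻¹ * pprod (Dyy X p₀) (w p₀)) := by
    rw [hBv, pprod_smul_add, hwy p₀ hp₀]
    have h := hkeyy (0, 1); rw [hDy01] at h
    linear_combination (xi e1 e2 σ p₀)⁻¹ * h
  -- Euclidean constraints from the S¹×S¹-valuedness
  have hLGi : ∀ i : Fin 4, HasFDerivAt (fun p => LG e1 e2 σ p i)
      ((ContinuousLinearMap.proj i).comp B) p₀ := fun i =>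
    (ContinuousLinearMap.proj i : (Fin 4 → ℝ) →L[ℝ] ℝ).hasFDerivAt.comp p₀ hBhas
  have hval : ∀ q, ∀ i : Fin 4, LG e1 e2 σ q i = (xi e1 e2 σ q)⁻¹ * (e1 q i + σ * e2 q i) := by
    intro q i
    simp [LG, Pi.smul_apply, Pi.add_apply, smul_eq_mul]
  have hcon1 : ∀ v : ℝ × ℝ,
      (e1 p₀ 0 + σ * e2 p₀ 0) * B v 0 + (e1 p₀ 1 + σ * e2 p₀ 1) * B v 1 = 0 := by
    have hFs := ((hLGi 0).mul (hLGi 0)).add ((hLGi 1).mul (hLGi 1))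
    have h0 : HasFDerivAt (fun p => LG e1 e2 σ p 0 * LG e1 e2 σ p 0 +
        LG e1 e2 σ p 1 * LG e1 e2 σ p 1) (0 : (ℝ × ℝ) →L[ℝ] ℝ) p₀ := by
      refine (hasFDerivAt_const (𝕜 := ℝ) (1 : ℝ) p₀).congr_of_eventuallyEq ?_
      filter_upwards [hp₀n] with q hq
      rw [hval q 0, hval q 1]
      have h2 := hxisq q hq
      have hne := ne_of_gt (hxipos q hq)
      field_simp
      linear_combination -h2
    have hu := hFs.unique h0
    intro v
    have hv := ContinuousLinearMap.ext_iff.1 hu v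
    simp only [ContinuousLinearMap.add_apply, ContinuousLinearMap.coe_smul',
      ContinuousLinearMap.comp_apply, Pi.smul_apply, smul_eq_mul,
      ContinuousLinearMap.zero_apply, ContinuousLinearMap.proj_apply] at hv
    rw [hval p₀ 0, hval p₀ 1] at hv
    have hinv : xi e1 e2 σ p₀ * (xi e1 e2 σ p₀)⁻¹ = 1 := mul_inv_cancel₀ hξne
    linear_combination (xi e1 e2 σ p₀ / 2) * hv -
      ((e1 p₀ 0 + σ * e2 p₀ 0) * B v 0 + (e1 p₀ 1 + σ * e2 p₀ 1) * B v 1) * hinv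
  have hcon2 : ∀ v : ℝ × ℝ,
      (e1 p₀ 2 + σ * e2 p₀ 2) * B v 2 + (e1 p₀ 3 + σ * e2 p₀ 3) * B v 3 = 0 := by
    have hFs := ((hLGi 2).mul (hLGi 2)).add ((hLGi 3).mul (hLGi 3))
    have h0 : HasFDerivAt (fun p => LG e1 e2 σ p 2 * LG e1 e2 σ p 2 +
        LG e1 e2 σ p 3 * LG e1 e2 σ p 3) (0 : (ℝ × ℝ) →L[ℝ] ℝ) p₀ := by
      refine (hasFDerivAt_const (𝕜 := ℝ) (1 : ℝ) p₀).congr_of_eventuallyEq ?_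
      filter_upwards [hp₀n] with q hq
      rw [hval q 2, hval q 3]
      have h2 := hxisq q hq
      have hne := ne_of_gt (hxipos q hq)
      have h3 := hww q hq
      simp only [hwdef, pprod, Pi.add_apply, Pi.smul_apply, smul_eq_mul] at h3
      field_simp
      linear_combination h3 - h2
    have hu := hFs.unique h0
    intro v
    have hv := ContinuousLinearMap.ext_iff.1 hu v
    simp only [ContinuousLinearMap.add_apply, ContinuousLinearMap.coe_smul',
      ContinuousLinearMap.comp_apply, Pi.smul_apply, smul_eq_mul,
      ContinuousLinearMap.zero_apply, ContinuousLinearMap.proj_apply] at hv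
    rw [hval p₀ 2, hval p₀ 3] at hv
    have hinv : xi e1 e2 σ p₀ * (xi e1 e2 σ p₀)⁻¹ = 1 := mul_inv_cancel₀ hξne
    linear_combination (xi e1 e2 σ p₀ / 2) * hv -
      ((e1 p₀ 2 + σ * e2 p₀ 2) * B v 2 + (e1 p₀ 3 + σ * e2 p₀ 3) * B v 3) * hinv
  -- the core equivalence
  obtain ⟨f1, f2, f3, f4, f5, f6, f7⟩ := hfr p₀ hp₀
  have hgd : pprod (Dx X p₀) (Dx X p₀) * pprod (Dy X p₀) (Dy X p₀)
      - pprod (Dx X p₀) (Dy X p₀) ^ 2 ≠ 0 := ne_of_lt (hgdet p₀ hp₀)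
  have hcore := core_equiv (Dx X p₀) (Dy X p₀) (e1 p₀) (e2 p₀) (B (1, 0)) (B (0, 1)) σ
    (xi e1 e2 σ p₀) (pprod (Dxx X p₀) (w p₀)) (pprod (Dxy X p₀) (w p₀))
    (pprod (Dyy X p₀) (w p₀)) hσ2 hξ0 hgd f1 f2 f3 f4 f5 f6 f7 (hxisq p₀ hp₀).symm
    hB1x hB1y hB2x hB2y (hcon1 (1, 0)) (hcon2 (1, 0)) (hcon1 (0, 1)) (hcon2 (0, 1))
  have hrankdet : Module.finrank ℝ (LinearMap.range B.toLinearMap) ≤ 1 ↔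
      pprod (Dxx X p₀) (w p₀) * pprod (Dyy X p₀) (w p₀)
        - pprod (Dxy X p₀) (w p₀) ^ 2 = 0 :=
    (myrank_le_one_iff B).trans hcore
  -- the height function part
  set lam := LG e1 e2 σ p₀ with hlamdef
  have hhd : ∀ q ∈ U, HasFDerivAt (fun p => pprod (X p) lam)
      ((pprodR lam).comp (fderiv ℝ X q)) q := by
    intro q hq
    have h := hasFDerivAt_pprod (((hXa q hq).differentiableAt (by simp)).hasFDerivAt)
      (hasFDerivAt_const (𝕜 := ℝ) lam q)
    have h2 : (pprodR lam).comp (fderiv ℝ X q) = (pprodR lam).comp (fderiv ℝ X q) +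
        (pprodR (X q)).comp (0 : (ℝ × ℝ) →L[ℝ] (Fin 4 → ℝ)) := by
      rw [ContinuousLinearMap.comp_zero, add_zero]
    rw [h2]; exact h
  have hpdx : ∀ q ∈ U, pdx (fun p => pprod (X p) lam) q = pprod (Dx X q) lam := by
    intro q hq
    rw [pdx, (hhd q hq).fderiv]
    exact pprodR_apply _ _
  have hpdy : ∀ q ∈ U, pdy (fun p => pprod (X p) lam) q = pprod (Dy X q) lam := by
    intro q hq
    rw [pdy, (hhd q hq).fderiv]
    exact pprodR_apply _ _
  have hlamprod : ∀ D : Fin 4 → ℝ, pprod D lam = (xi e1 e2 σ p₀)⁻¹ * pprod D (w p₀) :=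
    fun D => pprod_smul_right _ D (w p₀)
  have hfirstx : pprod (Dx X p₀) lam = 0 := by
    rw [hlamprod, pprod_comm (Dx X p₀), hwx p₀ hp₀, mul_zero]
  have hfirsty : pprod (Dy X p₀) lam = 0 := by
    rw [hlamprod, pprod_comm (Dy X p₀), hwy p₀ hp₀, mul_zero]
  -- second derivatives of the height function
  have hevx : (pdx fun p => pprod (X p) lam) =ᶠ[nhds p₀] fun q => pprod (Dx X q) lam := by
    filter_upwards [hp₀n] with q hq
    exact hpdx q hq
  have hevy : (pdy fun p => pprod (X p) lam) =ᶠ[nhds p₀] fun q => pprod (Dy X q) lam := by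
    filter_upwards [hp₀n] with q hq
    exact hpdy q hq
  have hDer2x : HasFDerivAt (fun q => pprod (Dx X q) lam)
      ((pprodR lam).comp ((ContinuousLinearMap.apply ℝ (Fin 4 → ℝ) ((1 : ℝ), (0 : ℝ))).comp F''))
      p₀ := by
    have h := hasFDerivAt_pprod hDx' (hasFDerivAt_const (𝕜 := ℝ) lam p₀)
    have h2 : (pprodR lam).comp
        ((ContinuousLinearMap.apply ℝ (Fin 4 → ℝ) ((1 : ℝ), (0 : ℝ))).comp F'') =
        (pprodR lam).comp
          ((ContinuousLinearMap.apply ℝ (Fin 4 → ℝ) ((1 : ℝ), (0 : ℝ))).comp F'') +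
        (pprodR (Dx X p₀)).comp (0 : (ℝ × ℝ) →L[ℝ] (Fin 4 → ℝ)) := by
      rw [ContinuousLinearMap.comp_zero, add_zero]
    rw [h2]; exact h
  have hDer2y : HasFDerivAt (fun q => pprod (Dy X q) lam)
      ((pprodR lam).comp ((ContinuousLinearMap.apply ℝ (Fin 4 → ℝ) ((0 : ℝ), (1 : ℝ))).comp F''))
      p₀ := by
    have h := hasFDerivAt_pprod hDy' (hasFDerivAt_const (𝕜 := ℝ) lam p₀)
    have h2 : (pprodR lam).comp
        ((ContinuousLinearMap.apply ℝ (Fin 4 → ℝ) ((0 : ℝ), (1 : ℝ))).comp F'') =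
        (pprodR lam).comp
          ((ContinuousLinearMap.apply ℝ (Fin 4 → ℝ) ((0 : ℝ), (1 : ℝ))).comp F'') +
        (pprodR (Dy X p₀)).comp (0 : (ℝ × ℝ) →L[ℝ] (Fin 4 → ℝ)) := by
      rw [ContinuousLinearMap.comp_zero, add_zero]
    rw [h2]; exact h
  have hxx : pdx (pdx fun p => pprod (X p) lam) p₀ = pprod (Dxx X p₀) lam := by
    show fderiv ℝ (pdx fun p => pprod (X p) lam) p₀ (1, 0) = _
    rw [hevx.fderiv_eq, hDer2x.fderiv]
    have e : ((pprodR lam).comp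
        ((ContinuousLinearMap.apply ℝ (Fin 4 → ℝ) ((1 : ℝ), (0 : ℝ))).comp F'')) (1, 0)
        = pprodR lam (((ContinuousLinearMap.apply ℝ (Fin 4 → ℝ) ((1 : ℝ), (0 : ℝ))).comp F'')
          (1, 0)) := rfl
    rw [e, hDx10, pprodR_apply]
  have hxy : pdy (pdx fun p => pprod (X p) lam) p₀ = pprod (Dxy X p₀) lam := by
    show fderiv ℝ (pdx fun p => pprod (X p) lam) p₀ (0, 1) = _
    rw [hevx.fderiv_eq, hDer2x.fderiv]
    have e : ((pprodR lam).comp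
        ((ContinuousLinearMap.apply ℝ (Fin 4 → ℝ) ((1 : ℝ), (0 : ℝ))).comp F'')) (0, 1)
        = pprodR lam (((ContinuousLinearMap.apply ℝ (Fin 4 → ℝ) ((1 : ℝ), (0 : ℝ))).comp F'')
          (0, 1)) := rfl
    rw [e, hDx01, pprodR_apply]
  have hyy : pdy (pdy fun p => pprod (X p) lam) p₀ = pprod (Dyy X p₀) lam := by
    show fderiv ℝ (pdy fun p => pprod (X p) lam) p₀ (0, 1) = _
    rw [hevy.fderiv_eq, hDer2y.fderiv]
    have e : ((pprodR lam).comp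
        ((ContinuousLinearMap.apply ℝ (Fin 4 → ℝ) ((0 : ℝ), (1 : ℝ))).comp F'')) (0, 1)
        = pprodR lam (((ContinuousLinearMap.apply ℝ (Fin 4 → ℝ) ((0 : ℝ), (1 : ℝ))).comp F'')
          (0, 1)) := rfl
    rw [e, hDy01, pprodR_apply]
  have hdetH : detHess (fun p => pprod (X p) lam) p₀ =
      ((xi e1 e2 σ p₀)⁻¹) ^ 2 *
        (pprod (Dxx X p₀) (w p₀) * pprod (Dyy X p₀) (w p₀)
          - pprod (Dxy X p₀) (w p₀) ^ 2) := by
    rw [detHess, hxx, hyy, hxy, hlamprod, hlamprod, hlamprod]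
    ring
  have hinv2 : ((xi e1 e2 σ p₀)⁻¹) ^ 2 ≠ 0 := pow_ne_zero 2 (inv_ne_zero hξne)
  have hdetiff : detHess (fun p => pprod (X p) lam) p₀ = 0 ↔
      pprod (Dxx X p₀) (w p₀) * pprod (Dyy X p₀) (w p₀)
        - pprod (Dxy X p₀) (w p₀) ^ 2 = 0 := by
    rw [hdetH, mul_eq_zero]
    constructor
    · rintro (h | h)
      · exact absurd h hinv2
      · exact h
    · intro h; exact Or.inr h
  constructor
  · constructor
    · rintro ⟨-, -, h3⟩
      exact hrankdet.2 (hdetiff.1 h3)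
    · intro h
      exact ⟨by rw [hpdx p₀ hp₀]; exact hfirstx, by rw [hpdy p₀ hp₀]; exact hfirsty,
        hdetiff.2 (hrankdet.1 h)⟩
  · exact ⟨fun h => hrankdet.1 h, fun h => hrankdet.2 h⟩
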